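/- (The p = 2 case.) Let N and M be positive integers with N dividing M, and let H be a subgroup of SL(2,ℤ) satisfying Γ(M) ≤ H ≤ Γ(N), [Γ(N) : H] = 2, and H ≠ Γ(N). Then for every positive integer L, Γ(L) ≤ H if and only if 2·N divides L. In particular the square root of a level-N modular unit that has some level M (with N | M) but is not itself of level N has level exactly 2N. -/

import Mathlib

/-!
Modulo any nonzero level `Q`, every element of `Γ(P)` is a product of `SL(2, ℤ)`-conjugates of
powers of `T ^ P`: a shear by a multiple of `P` makes the upper-left entry a unit modulo `Q`
(a stable-range argument), row and column operations then reduce to a diagonal matrix, and that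
diagonal matrix is itself a product of such transvections. Hence `Γ(P) ≤ ⟨⟨T ^ P⟩⟩ ⊔ Γ(Q)`.

Since `H` has index two in the normal subgroup `Γ(N)`, it contains every square of `Γ(N)`, in
particular every conjugate of `T ^ (2N)`; with `Γ(M) ≤ H` this gives `Γ(2N) ≤ H`. Conversely, if
`Γ(L) ≤ H` then `N ∣ L`, and if `L / N` were odd, every conjugate `x` of `T ^ N` would lie in `H`
because `x ^ 2` and `x ^ (L / N)` do; then `Γ(N) ≤ H`, contradicting `H ≠ Γ(N)`.
-/

open Matrix MatrixGroups CongruenceSubgroup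

namespace Subgroup

variable {G : Type*} [Group G] {H K : Subgroup G} {x : G}

lemma sq_mem_of_relIndex_eq_two (h : H.relIndex K = 2) (hx : x ∈ K) : x ^ 2 ∈ H :=
  mem_subgroupOf.1 (sq_mem_of_index_two h ⟨x, hx⟩)

lemma mem_of_relIndex_eq_two_of_pow_mem (h : H.relIndex K = 2) (hx : x ∈ K) {k : ℕ} (hk : Odd k)
    (hxk : x ^ k ∈ H) : x ∈ H := by
  obtain ⟨m, rfl⟩ := hk
  have hsq : (x ^ 2) ^ m ∈ H := pow_mem (sq_mem_of_relIndex_eq_two h hx) m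
  rwa [pow_succ, pow_mul, mul_mem_cancel_left hsq] at hxk

lemma normalClosure_singleton_le {y : G} (h : ∀ g : G, g * y * g⁻¹ ∈ H) :
    normalClosure {y} ≤ H := by
  refine (closure_le H).2 fun z hz ↦ ?_
  obtain ⟨_, rfl, hconj⟩ := Group.mem_conjugatesOfSet_iff.1 hz
  obtain ⟨g, rfl⟩ := isConj_iff.1 hconj
  exact h g

lemma normalClosure_sq_le_of_relIndex_eq_two [K.Normal] (h : H.relIndex K = 2) (hx : x ∈ K) :
    normalClosure {x ^ 2} ≤ H :=
  normalClosure_singleton_le fun g ↦ by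
    rw [← conj_pow]
    exact sq_mem_of_relIndex_eq_two h (‹K.Normal›.conj_mem x hx g)

lemma normalClosure_le_of_relIndex_eq_two [K.Normal] (h : H.relIndex K = 2) (hx : x ∈ K) {k : ℕ}
    (hk : Odd k) (hxk : normalClosure {x ^ k} ≤ H) : normalClosure {x} ≤ H :=
  normalClosure_singleton_le fun g ↦ by
    refine mem_of_relIndex_eq_two_of_pow_mem h (‹K.Normal›.conj_mem x hx g) hk ?_
    rw [conj_pow]
    exact hxk (normalClosure_normal.conj_mem _ (subset_normalClosure (Set.mem_singleton _)) g)

end Subgroup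

lemma Int.exists_isCoprime_add_mul {a c : ℤ} (h : IsCoprime a c) {Q : ℕ} (hQ : Q ≠ 0) :
    ∃ t : ℤ, IsCoprime (a + c * t) Q := by
  classical
  set t : ℤ := ∏ p ∈ Q.primeFactors.filter (fun p : ℕ ↦ ¬ (p : ℤ) ∣ a), (p : ℤ)
  refine ⟨t, Int.isCoprime_iff_nat_coprime.2 <| Nat.coprime_of_dvd fun p hp hpx hpQ ↦ ?_⟩
  rw [← Int.natCast_dvd] at hpx
  rw [Int.natAbs_natCast] at hpQ
  have hp' : Prime (p : ℤ) := Nat.prime_iff_prime_int.1 hp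
  by_cases hpa : (p : ℤ) ∣ a
  · have hpc : ¬ (p : ℤ) ∣ c := fun hpc ↦ hp'.not_isUnit (h.isUnit_of_dvd' hpa hpc)
    have hpt : ¬ (p : ℤ) ∣ t := by
      rw [hp'.dvd_finsetProd_iff]
      rintro ⟨q, hq, hpq⟩
      rw [Finset.mem_filter, Nat.mem_primeFactors] at hq
      rw [Int.natCast_dvd_natCast, Nat.prime_dvd_prime_iff_eq hp hq.1.1] at hpq
      exact hq.2 (hpq ▸ hpa)
    rcases hp'.dvd_or_dvd ((dvd_add_right hpa).1 hpx) with hpc' | hpt'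
    exacts [hpc hpc', hpt hpt']
  · have hpt : (p : ℤ) ∣ t := Finset.dvd_prod_of_mem _ <| Finset.mem_filter.2
      ⟨Nat.mem_primeFactors.2 ⟨hp, hpQ, hQ⟩, hpa⟩
    exact hpa ((dvd_add_left (hpt.mul_left c)).1 hpx)

local notation "τ₁₂" => SpecialLinearGroup.transvection (zero_ne_one (α := Fin 2))
local notation "τ₂₁" => SpecialLinearGroup.transvection (one_ne_zero (α := Fin 2))

namespace Matrix.SpecialLinearGroup

variable {R S : Type*} [CommRing R] [CommRing S]

lemma map_transvection {ι : Type*} [DecidableEq ι] [Fintype ι] (f : R →+* S) {i j : ι}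
    (hij : i ≠ j) (b : R) : map f (transvection hij b) = transvection hij (f b) := by
  ext k l
  simp only [map_apply_coe, RingHom.mapMatrix_apply, transvection_coe, map_apply, add_apply,
    one_apply, single_apply]
  split_ifs <;> simp

lemma coe_transvection₁₂ (b : R) : (τ₁₂ b : Matrix (Fin 2) (Fin 2) R) = !![1, b; 0, 1] := by
  ext i j; fin_cases i <;> fin_cases j <;> simp [transvection_coe]

lemma coe_transvection₂₁ (b : R) : (τ₂₁ b : Matrix (Fin 2) (Fin 2) R) = !![1, 0; b, 1] := by
  ext i j; fin_cases i <;> fin_cases j <;> simp [transvection_coe]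

/-- When `v * (s + 1) = 1`, the middle factors `τ₁₂ s * (⋯) * τ₂₁ (-s)` multiply to
`diag(s + 1, v)`. -/
def transvectionWord (t c v s b : R) : SL(2, R) :=
  τ₁₂ (-t) * τ₂₁ (c * v) * τ₁₂ s * (τ₂₁ 1 * τ₁₂ (-(v * s)) * (τ₂₁ 1)⁻¹) * τ₂₁ (-s) * τ₁₂ (v * b)

lemma eq_transvectionWord (g : SL(2, R)) {t v : R} (h : v * (g 0 0 + t * g 1 0) = 1) :
    g = transvectionWord t (g 1 0) v (g 0 0 + t * g 1 0 - 1) (g 0 1 + t * g 1 1) := by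
  have hdet : g 0 0 * g 1 1 - g 0 1 * g 1 0 = 1 := by
    have := g.prop; rwa [det_fin_two] at this
  ext i j
  simp only [transvectionWord, transvection_inv, coe_mul, coe_transvection₁₂, coe_transvection₂₁]
  fin_cases i <;> fin_cases j <;> simp <;> grind

lemma map_transvectionWord (f : R →+* S) (t c v s b : R) :
    map f (transvectionWord t c v s b) = transvectionWord (f t) (f c) (f v) (f s) (f b) := by
  simp [transvectionWord, map_transvection]

end Matrix.SpecialLinearGroup

open Matrix.SpecialLinearGroup ModularGroup Subgroup

lemma ModularGroup.T_zpow_eq_transvection (m : ℤ) : T ^ m = τ₁₂ m :=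
  Subtype.ext <| by rw [coe_T_zpow, coe_transvection₁₂]

lemma ModularGroup.S_mul_transvection_mul_S_inv (m : ℤ) : S * τ₁₂ m * S⁻¹ = τ₂₁ (-m) := by
  ext i j
  simp only [Matrix.SpecialLinearGroup.coe_mul, Matrix.SpecialLinearGroup.coe_inv, coe_S,
    coe_transvection₁₂, coe_transvection₂₁, adjugate_fin_two]
  fin_cases i <;> fin_cases j <;> simp

section normalClosure

variable {P : ℕ} {m : ℤ}

lemma transvection₁₂_mem_normalClosure (h : (P : ℤ) ∣ m) :
    τ₁₂ m ∈ normalClosure {T ^ (P : ℤ)} := by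
  obtain ⟨j, rfl⟩ := h
  rw [← T_zpow_eq_transvection, _root_.zpow_mul]
  exact zpow_mem (subset_normalClosure (Set.mem_singleton _)) j

lemma transvection₂₁_mem_normalClosure (h : (P : ℤ) ∣ m) :
    τ₂₁ m ∈ normalClosure {T ^ (P : ℤ)} := by
  rw [← neg_neg m, ← S_mul_transvection_mul_S_inv]
  exact normalClosure_normal.conj_mem _ (transvection₁₂_mem_normalClosure h.neg_right) S

lemma transvectionWord_mem_normalClosure {t c v s b : ℤ} (ht : (P : ℤ) ∣ t) (hc : (P : ℤ) ∣ c)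
    (hs : (P : ℤ) ∣ s) (hb : (P : ℤ) ∣ b) :
    transvectionWord t c v s b ∈ normalClosure {T ^ (P : ℤ)} := by
  have h₁₂ := @transvection₁₂_mem_normalClosure P
  have h₂₁ := @transvection₂₁_mem_normalClosure P
  have hconj := (normalClosure_normal (s := {T ^ (P : ℤ)})).conj_mem
  unfold transvectionWord
  refine mul_mem (mul_mem (mul_mem (mul_mem (mul_mem ?_ ?_) ?_) ?_) ?_) ?_
  · exact h₁₂ ht.neg_right
  · exact h₂₁ (hc.mul_right v)
  · exact h₁₂ hs
  · exact hconj _ (h₁₂ (hs.mul_left v).neg_right) _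
  · exact h₂₁ hs.neg_right
  · exact h₁₂ (hb.mul_left v)

end normalClosure

namespace CongruenceSubgroup

lemma mem_Gamma_iff_dvd {P : ℕ} {g : SL(2, ℤ)} : g ∈ Γ(P) ↔
    (P : ℤ) ∣ g 0 0 - 1 ∧ (P : ℤ) ∣ g 0 1 ∧ (P : ℤ) ∣ g 1 0 ∧ (P : ℤ) ∣ g 1 1 - 1 := by
  simp only [Gamma_mem, ← ZMod.intCast_zmod_eq_zero_iff_dvd, Int.cast_sub, Int.cast_one,
    sub_eq_zero]

lemma Gamma_le_Gamma_of_dvd {A B : ℕ} (h : A ∣ B) : Γ(B) ≤ Γ(A) := by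
  intro g hg
  have hAB := Int.natCast_dvd_natCast.2 h
  obtain ⟨h₀₀, h₀₁, h₁₀, h₁₁⟩ := mem_Gamma_iff_dvd.1 hg
  exact mem_Gamma_iff_dvd.2 ⟨hAB.trans h₀₀, hAB.trans h₀₁, hAB.trans h₁₀, hAB.trans h₁₁⟩

lemma T_zpow_mem_Gamma_iff {N : ℕ} {m : ℤ} : T ^ m ∈ Γ(N) ↔ (N : ℤ) ∣ m := by
  simp [coe_T_zpow, ZMod.intCast_zmod_eq_zero_iff_dvd]

lemma exists_mul_add_mul_eq_one_of_mem_Gamma {P Q : ℕ} (hQ : Q ≠ 0) {g : SL(2, ℤ)}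
    (hg : g ∈ Γ(P)) : ∃ t v : ℤ, (P : ℤ) ∣ t ∧ (v : ZMod Q) * (g 0 0 + t * g 1 0) = 1 := by
  obtain ⟨k, hk⟩ := (mem_Gamma_iff_dvd.1 hg).1
  have hdet : g 0 0 * g 1 1 - g 0 1 * g 1 0 = 1 := by
    have := g.prop; rwa [det_fin_two] at this
  have hac : IsCoprime (g 0 0) (g 1 0) := ⟨g 1 1, -g 0 1, by linear_combination hdet⟩
  have haP : IsCoprime (g 0 0) P := ⟨1, -k, by linear_combination hk⟩
  obtain ⟨t, v, y, hv⟩ := Int.exists_isCoprime_add_mul (hac.mul_right haP) hQ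
  refine ⟨P * t, v, dvd_mul_right _ _, ?_⟩
  have := congrArg (Int.cast : ℤ → ZMod Q) hv
  push_cast [ZMod.natCast_self] at this ⊢
  linear_combination this

theorem Gamma_le_normalClosure_sup_Gamma (P : ℕ) {Q : ℕ} (hQ : Q ≠ 0) :
    Γ(P) ≤ normalClosure {T ^ (P : ℤ)} ⊔ Γ(Q) := by
  intro g hg
  obtain ⟨hPa, hPb, hPc, -⟩ := mem_Gamma_iff_dvd.1 hg
  obtain ⟨t, v, hPt, hv⟩ := exists_mul_add_mul_eq_one_of_mem_Gamma hQ hg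
  set w := transvectionWord t (g 1 0) v (g 0 0 + t * g 1 0 - 1) (g 0 1 + t * g 1 1)
  have hw : w ∈ normalClosure {T ^ (P : ℤ)} := by
    refine transvectionWord_mem_normalClosure hPt hPc ?_ (hPb.add (hPt.mul_right _))
    rw [add_sub_right_comm]
    exact hPa.add (hPt.mul_right _)
  have hwg : w⁻¹ * g ∈ Γ(Q) := by
    rw [Gamma_mem', map_mul, map_inv, inv_mul_eq_one, map_transvectionWord,
      eq_transvectionWord (map (Int.castRingHom (ZMod Q)) g) (t := (t : ZMod Q))
        (v := (v : ZMod Q)) (by simpa using hv)]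
    simp
  simpa using mul_mem_sup hw hwg

lemma two_mul_dvd_of_Gamma_le {N L : ℕ} (hL : L ≠ 0) {H : Subgroup SL(2, ℤ)} (hle : H ≤ Γ(N))
    (hidx : H.relIndex Γ(N) = 2) (hne : H ≠ Γ(N)) (hLH : Γ(L) ≤ H) : 2 * N ∣ L := by
  obtain ⟨k, rfl⟩ : N ∣ L := Int.natCast_dvd_natCast.1 <|
    T_zpow_mem_Gamma_iff.1 (hle (hLH (T_zpow_mem_Gamma_iff.2 dvd_rfl)))
  obtain ⟨j, rfl⟩ | hk := Nat.even_or_odd k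
  · exact ⟨j, by ring⟩
  have := Gamma_normal N
  have := Gamma_normal (N * k)
  have hT : T ^ (N : ℤ) ∈ Γ(N) := T_zpow_mem_Gamma_iff.2 dvd_rfl
  have hTk : normalClosure {(T ^ (N : ℤ)) ^ k} ≤ H := by
    refine (normalClosure_le_normal (Set.singleton_subset_iff.2 ?_)).trans hLH
    rw [← zpow_natCast, ← _root_.zpow_mul, SetLike.mem_coe, T_zpow_mem_Gamma_iff]
    exact_mod_cast dvd_rfl
  refine absurd (le_antisymm hle ?_) hne
  calc Γ(N) ≤ normalClosure {T ^ (N : ℤ)} ⊔ Γ(N * k) := Gamma_le_normalClosure_sup_Gamma N hL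
    _ ≤ H := sup_le (normalClosure_le_of_relIndex_eq_two hidx hT hk hTk) hLH

end CongruenceSubgroup

theorem Gamma_le_iff_dvd_of_relindex_two_general (N M : ℕ) (hM : 0 < M)
    (H : Subgroup (Matrix.SpecialLinearGroup (Fin 2) ℤ))
    (hMH : CongruenceSubgroup.Gamma M ≤ H) (hle : H ≤ CongruenceSubgroup.Gamma N)
    (hidx : H.relIndex (CongruenceSubgroup.Gamma N) = 2)
    (hne : H ≠ CongruenceSubgroup.Gamma N) :
    ∀ L : ℕ, 0 < L → (CongruenceSubgroup.Gamma L ≤ H ↔ 2 * N ∣ L) := by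
  intro L hL
  refine ⟨two_mul_dvd_of_Gamma_le hL.ne' hle hidx hne, fun h ↦ ?_⟩
  have := Gamma_normal N
  have hT : T ^ (N : ℤ) ∈ Γ(N) := T_zpow_mem_Gamma_iff.2 dvd_rfl
  calc Γ(L) ≤ Γ(2 * N) := Gamma_le_Gamma_of_dvd h
    _ ≤ normalClosure {T ^ ((2 * N : ℕ) : ℤ)} ⊔ Γ(M) := Gamma_le_normalClosure_sup_Gamma _ hM.ne'
    _ ≤ H := by
      refine sup_le ?_ hMH
      rw [show ((2 * N : ℕ) : ℤ) = N * (2 : ℕ) by push_cast; ring, _root_.zpow_mul, zpow_natCast]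
      exact normalClosure_sq_le_of_relIndex_eq_two hidx hT

/-- The `p = 2` case of the main theorem: if `N ∣ M`, `Γ(M) ≤ H ≤ Γ(N)`,
`[Γ(N) : H] = 2` and `H ≠ Γ(N)`, then for every positive `L`,
`Γ(L) ≤ H ↔ 2 * N ∣ L`. -/
theorem Gamma_le_iff_dvd_of_relindex_two (N M : ℕ) (hN : 0 < N) (hM : 0 < M) (hNM : N ∣ M)
    (H : Subgroup (Matrix.SpecialLinearGroup (Fin 2) ℤ))
    (hMH : CongruenceSubgroup.Gamma M ≤ H) (hle : H ≤ CongruenceSubgroup.Gamma N)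
    (hidx : H.relIndex (CongruenceSubgroup.Gamma N) = 2)
    (hne : H ≠ CongruenceSubgroup.Gamma N) :
    ∀ L : ℕ, 0 < L → (CongruenceSubgroup.Gamma L ≤ H ↔ 2 * N ∣ L) :=
  Gamma_le_iff_dvd_of_relindex_two_general N M hM H hMH hle hidx hne
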